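/- Let p be a nonzero binary cubic with coefficients (λ₁,λ₂,λ₃,λ₄), so p(s,t) = λ₁s³+λ₂s²t+λ₃st²+λ₄t³, with partial derivatives p₁(s,t) = 3λ₁s²+2λ₂st+λ₃t² and p₂(s,t) = λ₂s²+2λ₃st+3λ₄t². Let x,y,z,w ∈ ℝ satisfy the half-flat condition p(y,−x) − y·p₁(w,−z) + x·p₂(w,−z) = 0, and suppose the cubic Q(x,y,z,w) := (1/3)(xu₁+yu₂)³ − (xu₁+yu₂)(zu₁+wu₂)² has vanishing discriminant, Δ₃(Q(x,y,z,w)) = 0. Then either Q(x,y,z,w) = 0, or: (x,y) ≠ (0,0), the linear form xu₁+yu₂ divides p (i.e. p(y,−x) = 0), and there exists μ ∈ ℝ such that Q(x,y,z,w) = μ·(xu₁+yu₂)³, i.e. its coefficients equal μ·(x³, 3x²y, 3xy², y³). -/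

import Mathlib

/-!
The discriminant of `Q(x,y,z,w)` is `(4/3)(xw − yz)⁶`, so it vanishes exactly when `(z,w)` is
proportional to `(x,y)`. If `(x,y) = 0` then `Q = 0`; otherwise `(z,w) = t(x,y)` and
`Q = ((1 − 3t²)/3)(xu₁ + yu₂)³`. By homogeneity and Euler's identity the half-flat condition
reduces to `(1 − 3t²) p(y,−x) = 0`, so either `Q = 0` or `xu₁ + yu₂` divides `p`.
-/

noncomputable section

/-- The discriminant of a binary cubic `q 0 • u₁³ + q 1 • u₁²u₂ + q 2 • u₁u₂² + q 3 • u₂³`. -/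
def disc3 (q : Fin 4 → ℝ) : ℝ :=
  q 1 ^ 2 * q 2 ^ 2 - 4 * q 0 * q 2 ^ 3 - 4 * q 1 ^ 3 * q 3 +
    18 * q 0 * q 1 * q 2 * q 3 - 27 * q 0 ^ 2 * q 3 ^ 2

/-- The coefficient vector of the binary cubic
`Q(x,y,z,w) = (1/3)(x u₁ + y u₂)³ − (x u₁ + y u₂)(z u₁ + w u₂)²`. -/
def Qcoeff (x y z w : ℝ) : Fin 4 → ℝ :=
  ![x ^ 3 / 3 - x * z ^ 2, x ^ 2 * y - 2 * x * z * w - y * z ^ 2,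
    x * y ^ 2 - x * w ^ 2 - 2 * y * z * w, y ^ 3 / 3 - y * w ^ 2]

/-- The binary cubic `p(s,t) = λ₁s³ + λ₂s²t + λ₃st² + λ₄t³` with coefficient vector `l`. -/
def cubicP (l : Fin 4 → ℝ) (s t : ℝ) : ℝ :=
  l 0 * s ^ 3 + l 1 * s ^ 2 * t + l 2 * s * t ^ 2 + l 3 * t ^ 3

/-- The partial derivative of `cubicP l` in its first variable. -/
def cubicP1 (l : Fin 4 → ℝ) (s t : ℝ) : ℝ :=
  3 * l 0 * s ^ 2 + 2 * l 1 * s * t + l 2 * t ^ 2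

/-- The partial derivative of `cubicP l` in its second variable. -/
def cubicP2 (l : Fin 4 → ℝ) (s t : ℝ) : ℝ :=
  l 1 * s ^ 2 + 2 * l 2 * s * t + 3 * l 3 * t ^ 2

theorem euler_cubicP (l : Fin 4 → ℝ) (s t : ℝ) :
    s * cubicP1 l s t + t * cubicP2 l s t = 3 * cubicP l s t := by
  simp only [cubicP, cubicP1, cubicP2]
  ring

theorem cubicP1_mul_mul (l : Fin 4 → ℝ) (c s t : ℝ) :
    cubicP1 l (c * s) (c * t) = c ^ 2 * cubicP1 l s t := by
  simp only [cubicP1]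
  ring

theorem cubicP2_mul_mul (l : Fin 4 → ℝ) (c s t : ℝ) :
    cubicP2 l (c * s) (c * t) = c ^ 2 * cubicP2 l s t := by
  simp only [cubicP2]
  ring

theorem halfFlat_mul_mul (l : Fin 4 → ℝ) (x y t : ℝ) :
    cubicP l y (-x) - y * cubicP1 l (t * y) (-(t * x)) + x * cubicP2 l (t * y) (-(t * x)) =
      (1 - 3 * t ^ 2) * cubicP l y (-x) := by
  rw [← mul_neg, cubicP1_mul_mul, cubicP2_mul_mul]
  linear_combination (-t ^ 2) * euler_cubicP l y (-x)

theorem disc3_Qcoeff (x y z w : ℝ) :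
    disc3 (Qcoeff x y z w) = 4 / 3 * (x * w - y * z) ^ 6 := by
  simp only [disc3, Qcoeff, Matrix.cons_val_zero, Matrix.cons_val_one, Matrix.cons_val_two,
    Matrix.cons_val_three, Matrix.head_cons, Matrix.tail_cons]
  ring

theorem Qcoeff_zero_zero (z w : ℝ) : Qcoeff 0 0 z w = 0 := by
  ext i
  fin_cases i <;> simp [Qcoeff]

theorem Qcoeff_mul_mul (x y t : ℝ) :
    Qcoeff x y (t * x) (t * y) =
      ((1 - 3 * t ^ 2) / 3) • ![x ^ 3, 3 * x ^ 2 * y, 3 * x * y ^ 2, y ^ 3] := by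
  ext i
  fin_cases i <;> (simp [Qcoeff]; ring)

theorem exists_eq_mul_of_mul_sub_mul_eq_zero {x y z w : ℝ} (hxy : (x, y) ≠ (0, 0))
    (h : x * w - y * z = 0) : ∃ t : ℝ, z = t * x ∧ w = t * y := by
  have hnorm : x ^ 2 + y ^ 2 ≠ 0 := by
    contrapose! hxy
    have hx : x = 0 := by nlinarith [sq_nonneg x, sq_nonneg y]
    have hy : y = 0 := by nlinarith [sq_nonneg x, sq_nonneg y]
    rw [hx, hy]
  refine ⟨(x * z + y * w) / (x ^ 2 + y ^ 2), ?_, ?_⟩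
  · field_simp
    linear_combination (-y) * h
  · field_simp
    linear_combination x * h

theorem stmt18_general (l : Fin 4 → ℝ) (x y z w : ℝ)
    (hhf : cubicP l y (-x) - y * cubicP1 l w (-z) + x * cubicP2 l w (-z) = 0)
    (hdisc : disc3 (Qcoeff x y z w) = 0) :
    Qcoeff x y z w = 0 ∨
      ((x, y) ≠ (0, 0) ∧ cubicP l y (-x) = 0 ∧
        ∃ μ : ℝ, Qcoeff x y z w = μ • ![x ^ 3, 3 * x ^ 2 * y, 3 * x * y ^ 2, y ^ 3]) := by
  have hcross : x * w - y * z = 0 := by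
    rw [disc3_Qcoeff] at hdisc
    exact pow_eq_zero_iff (n := 6) (by norm_num) |>.mp (by linarith)
  by_cases hxy : (x, y) = (0, 0)
  · obtain ⟨rfl, rfl⟩ := Prod.mk.inj hxy
    exact Or.inl (Qcoeff_zero_zero z w)
  obtain ⟨t, rfl, rfl⟩ := exists_eq_mul_of_mul_sub_mul_eq_zero hxy hcross
  rw [halfFlat_mul_mul] at hhf
  rw [Qcoeff_mul_mul]
  rcases mul_eq_zero.mp hhf with ht | hp
  · left
    rw [ht, zero_div, zero_smul]
  · exact Or.inr ⟨hxy, hp, _, rfl⟩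

theorem stmt18 (l : Fin 4 → ℝ) (hl : l ≠ 0) (x y z w : ℝ)
    (hhf : cubicP l y (-x) - y * cubicP1 l w (-z) + x * cubicP2 l w (-z) = 0)
    (hdisc : disc3 (Qcoeff x y z w) = 0) :
    Qcoeff x y z w = 0 ∨
      ((x, y) ≠ (0, 0) ∧ cubicP l y (-x) = 0 ∧
        ∃ μ : ℝ, Qcoeff x y z w = μ • ![x ^ 3, 3 * x ^ 2 * y, 3 * x * y ^ 2, y ^ 3]) :=
  stmt18_general l x y z w hhf hdisc
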